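/- Suppose (𝒳, S, γ, (Λ_a)_{a∈A}) is a spectral decomposition system for a Euclidean space 𝔥 with {Λ_a : a ∈ A} closed in L(𝒳,𝔥). Let φ : 𝒳 → [−∞,+∞] be S-invariant and let X ∈ 𝔥. Then ∂_L(φ∘γ)(X) = {Λ_a y : y ∈ ∂_L φ(γ(X)), a ∈ A_X}. -/

import Mathlib

open Filter Topology Set Metric
open scoped RealInnerProductSpace

noncomputable section

/-- A spectral decomposition system `(𝒳, S, γ, (Λ_a)_{a ∈ A})` for the space `H`:
`S` acts on `𝒳` by linear isometries (via `act`), `γ : H → 𝒳` is the spectral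
mapping, each `Λ a : 𝒳 → H` is a linear isometry, and the axioms [A], [B], [C] hold,
with `τ` the `S`-invariant ordering mapping of axiom [A]. -/
structure SDS (𝒳 H : Type*) [NormedAddCommGroup 𝒳] [InnerProductSpace ℝ 𝒳]
    [NormedAddCommGroup H] [InnerProductSpace ℝ H]
    (S : Type*) [Group S] (A : Type*) where
  act : S →* (𝒳 ≃ₗᵢ[ℝ] 𝒳)
  γ : H → 𝒳
  Λ : A → 𝒳 →ₗᵢ[ℝ] H
  τ : 𝒳 → 𝒳
  τ_inv : ∀ (s : S) (x : 𝒳), τ (act s x) = τ x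
  τ_orbit : ∀ x : 𝒳, ∃ s : S, τ x = act s x
  γΛ : ∀ (a : A) (x : 𝒳), γ (Λ a x) = τ x
  decomp : ∀ X : H, ∃ a : A, X = Λ a (γ X)
  inner_le : ∀ X Y : H, ⟪X, Y⟫ ≤ ⟪γ X, γ Y⟫

variable {𝒳 H S A : Type*} [NormedAddCommGroup 𝒳] [InnerProductSpace ℝ 𝒳]
    [NormedAddCommGroup H] [InnerProductSpace ℝ H] [Group S]

/-- The set `{Λ_a : a ∈ A}`, regarded as a subset of the space `L(𝒳, H)` of
continuous linear maps with the operator norm. -/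
def SDS.LambdaSet (𝔖 : SDS 𝒳 H S A) : Set (𝒳 →L[ℝ] H) :=
  {L | ∃ a : A, L = (𝔖.Λ a).toContinuousLinearMap}

/-- `A_X = {a ∈ A : X = Λ_a (γ X)}`. -/
def SDS.AX (𝔖 : SDS 𝒳 H S A) (X : H) : Set A := {a | X = 𝔖.Λ a (𝔖.γ X)}

/-- The Fréchet subdifferential of an extended-real-valued `f` at `x`: empty unless
`f x` is finite, in which case it is the set of `y` with
`liminf_{z → x, z ≠ x} (f(z) - f(x) - ⟨z - x, y⟩)/‖z - x‖ ≥ 0`, in ε-δ form. -/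
def fSubdiff {E : Type*} [NormedAddCommGroup E] [InnerProductSpace ℝ E]
    (f : E → EReal) (x : E) : Set E :=
  {y | (∃ r : ℝ, f x = (r : EReal)) ∧ ∀ ε : ℝ, 0 < ε → ∃ δ : ℝ, 0 < δ ∧
    ∀ z : E, ‖z - x‖ < δ → f x + ((⟪z - x, y⟫ - ε * ‖z - x‖ : ℝ) : EReal) ≤ f z}

/-- The limiting subdifferential of `f` at `x`: empty unless `f x` is finite, in which
case it is the set of limits `y` of sequences `y_n ∈ ∂_F f(x_n)` with `x_n → x` and
`f(x_n) → f(x)`. -/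
def lSubdiff {E : Type*} [NormedAddCommGroup E] [InnerProductSpace ℝ E]
    (f : E → EReal) (x : E) : Set E :=
  {y | (∃ r : ℝ, f x = (r : EReal)) ∧ ∃ xn yn : ℕ → E,
    (∀ n, yn n ∈ fSubdiff f (xn n)) ∧ Tendsto xn atTop (𝓝 x) ∧
    Tendsto (fun n => f (xn n)) atTop (𝓝 (f x)) ∧ Tendsto yn atTop (𝓝 y)}

/-! For `⊇`, a Fréchet subgradient `v ∈ ∂_F φ(x)` lifts to `Λ_b v ∈ ∂_F(φ ∘ γ)(Λ_b x)`: near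
`Λ_b x`, the point `γ Z` is compared with a point of its `S`-orbit near `x`, using
`⟨Z, W⟩ ≤ ⟨γ Z, γ W⟩` at `W = Λ_b (x + t v)`. For `⊆`, a Fréchet subgradient `Y` of `φ ∘ γ` at `X`
satisfies `Y = Λ_a Λ_a^* Y` for some `a ∈ A_X`, and `Λ_a^* Y ∈ ∂_F φ(γ X)` since
`φ = φ ∘ γ ∘ Λ_a`. Since `{Λ_a}` is closed and bounded, hence compact, the decompositions along a
sequence `Y_n ∈ ∂_F(φ ∘ γ)(X_n)` converge along a subsequence to one at the limit. -/

theorem Filter.Tendsto.clm_apply {E F : Type*} [NormedAddCommGroup E] [NormedSpace ℝ E]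
    [NormedAddCommGroup F] [NormedSpace ℝ F] {T : ℕ → E →L[ℝ] F} {L : E →L[ℝ] F}
    {u : ℕ → E} {x : E} (hT : Tendsto T atTop (𝓝 L)) (hu : Tendsto u atTop (𝓝 x)) :
    Tendsto (fun n => T n (u n)) atTop (𝓝 (L x)) :=
  (isBoundedBilinearMap_apply.continuous.tendsto (L, x)).comp (hT.prodMk_nhds hu)

section InnerProductSpace

variable {E F : Type*} [NormedAddCommGroup E] [InnerProductSpace ℝ E]
  [NormedAddCommGroup F] [InnerProductSpace ℝ F]

theorem norm_sub_le_of_norm_eq_of_inner_le {f : E → F} (hn : ∀ x, ‖f x‖ = ‖x‖)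
    (hi : ∀ x y, ⟪x, y⟫ ≤ ⟪f x, f y⟫) (x y : E) : ‖f x - f y‖ ≤ ‖x - y‖ := by
  have h₁ := norm_sub_sq_real (f x) (f y)
  have h₂ := norm_sub_sq_real x y
  rw [hn, hn] at h₁
  nlinarith [hi x y, norm_nonneg (f x - f y), norm_nonneg (x - y)]

namespace LinearIsometry

variable [CompleteSpace E] [CompleteSpace F] (L : E →ₗᵢ[ℝ] F)

theorem norm_adjoint_apply_le (y : F) : ‖L.toContinuousLinearMap.adjoint y‖ ≤ ‖y‖ := by
  calc ‖L.toContinuousLinearMap.adjoint y‖ ≤ ‖L.toContinuousLinearMap.adjoint‖ * ‖y‖ :=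
        ContinuousLinearMap.le_opNorm _ _
    _ = ‖L.toContinuousLinearMap‖ * ‖y‖ := by rw [LinearIsometryEquiv.norm_map]
    _ ≤ ‖y‖ := mul_le_of_le_one_left (norm_nonneg y) L.norm_toContinuousLinearMap_le

theorem apply_adjoint_apply_of_norm_le {y : F} (h : ‖y‖ ≤ ‖L.toContinuousLinearMap.adjoint y‖) :
    L (L.toContinuousLinearMap.adjoint y) = y := by
  set u := L.toContinuousLinearMap.adjoint y
  have hinner : ⟪y, L u⟫ = ‖u‖ ^ 2 := by
    rw [real_inner_comm, ← real_inner_self_eq_norm_sq, ContinuousLinearMap.adjoint_inner_right]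
    rfl
  have hsq : ‖y - L u‖ ^ 2 = ‖y‖ ^ 2 - ‖u‖ ^ 2 := by
    rw [norm_sub_sq_real, hinner, L.norm_map]; ring
  have hu : ‖u‖ = ‖y‖ := le_antisymm (L.norm_adjoint_apply_le y) h
  rw [hu, sub_self, sq_eq_zero_iff, norm_eq_zero, sub_eq_zero] at hsq
  exact hsq.symm

end LinearIsometry

theorem inner_sub_le_of_mem_fSubdiff {f : E → EReal} {x y : E} (hy : y ∈ fSubdiff f x)
    {ε : ℝ} (hε : 0 < ε) : ∀ᶠ z in 𝓝 x, f z ≤ f x → ⟪z - x, y⟫ ≤ ε * ‖z - x‖ := by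
  obtain ⟨⟨r, hr⟩, hy⟩ := hy
  obtain ⟨δ, hδ, hyδ⟩ := hy ε hε
  filter_upwards [ball_mem_nhds x hδ] with z hz hfz
  have h := (hyδ z (mem_ball_iff_norm.1 hz)).trans hfz
  rw [hr, ← EReal.coe_add, EReal.coe_le_coe_iff] at h
  linarith

theorem mem_fSubdiff_of_forall_exists {f : E → EReal} {g : F → EReal} {x v : E} {w y : F}
    (hv : v ∈ fSubdiff f x) (hfg : g w = f x)
    (h : ∀ ε > 0, ∃ C : ℝ, ∀ Z ≠ w, ∃ z, f z ≤ g Z ∧ ‖z - x‖ ≤ C * ‖Z - w‖ ∧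
      ⟪Z - w, y⟫ - ⟪z - x, v⟫ ≤ ε * ‖Z - w‖) :
    y ∈ fSubdiff g w := by
  obtain ⟨⟨r, hr⟩, hv⟩ := hv
  refine ⟨⟨r, hfg.trans hr⟩, fun ε hε => ?_⟩
  obtain ⟨C, hC⟩ := h (ε / 2) (half_pos hε)
  set K := |C| + 1
  have hK : 0 < K := by positivity
  obtain ⟨δ, hδ, hvδ⟩ := hv (ε / (2 * K)) (by positivity)
  refine ⟨δ / K, div_pos hδ hK, fun Z hZ => ?_⟩
  rcases eq_or_ne Z w with rfl | hZw
  · simp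
  obtain ⟨z, hfz, hzx, hyz⟩ := hC Z hZw
  have hzK : ‖z - x‖ ≤ K * ‖Z - w‖ :=
    hzx.trans (by gcongr; exact (le_abs_self C).trans (le_add_of_nonneg_right zero_le_one))
  have hzδ : ‖z - x‖ < δ := hzK.trans_lt (by rwa [lt_div_iff₀' hK] at hZ)
  have hreal : ⟪Z - w, y⟫ - ε * ‖Z - w‖ ≤ ⟪z - x, v⟫ - ε / (2 * K) * ‖z - x‖ := by
    have : ε / (2 * K) * ‖z - x‖ ≤ ε / 2 * ‖Z - w‖ := by
      calc ε / (2 * K) * ‖z - x‖ ≤ ε / (2 * K) * (K * ‖Z - w‖) := by gcongr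
        _ = ε / 2 * ‖Z - w‖ := by field_simp
    linarith
  calc g w + ((⟪Z - w, y⟫ - ε * ‖Z - w‖ : ℝ) : EReal)
      ≤ f x + ((⟪z - x, v⟫ - ε / (2 * K) * ‖z - x‖ : ℝ) : EReal) := by
        rw [hfg]; gcongr
    _ ≤ f z := hvδ z hzδ
    _ ≤ g Z := hfz

theorem LinearIsometry.adjoint_mem_fSubdiff_comp [CompleteSpace E] [CompleteSpace F]
    (L : E →ₗᵢ[ℝ] F) {g : F → EReal} {x : E} {y : F} (hy : y ∈ fSubdiff g (L x)) :
    L.toContinuousLinearMap.adjoint y ∈ fSubdiff (g ∘ L) x := by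
  obtain ⟨hfin, hy⟩ := hy
  refine ⟨hfin, fun ε hε => ?_⟩
  obtain ⟨δ, hδ, hyδ⟩ := hy ε hε
  refine ⟨δ, hδ, fun z hz => ?_⟩
  have h := hyδ (L z) (by rwa [← map_sub, L.norm_map])
  rwa [← map_sub, L.norm_map, ← L.coe_toContinuousLinearMap,
    ← ContinuousLinearMap.adjoint_inner_right] at h

end InnerProductSpace

namespace SDS

variable (𝔖 : SDS 𝒳 H S A)

theorem norm_τ (x : 𝒳) : ‖𝔖.τ x‖ = ‖x‖ := by
  obtain ⟨s, hs⟩ := 𝔖.τ_orbit x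
  rw [hs, LinearIsometryEquiv.norm_map]

theorem norm_γ (X : H) : ‖𝔖.γ X‖ = ‖X‖ := by
  obtain ⟨a, ha⟩ := 𝔖.decomp X
  conv_rhs => rw [ha, LinearIsometry.norm_map]

theorem inner_le_inner_τ (x y : 𝒳) : ⟪x, y⟫ ≤ ⟪𝔖.τ x, 𝔖.τ y⟫ := by
  obtain ⟨a, -⟩ := 𝔖.decomp 0
  simpa only [LinearIsometry.inner_map_map, γΛ] using 𝔖.inner_le (𝔖.Λ a x) (𝔖.Λ a y)

theorem norm_γ_sub_γ_le (X Y : H) : ‖𝔖.γ X - 𝔖.γ Y‖ ≤ ‖X - Y‖ :=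
  norm_sub_le_of_norm_eq_of_inner_le 𝔖.norm_γ 𝔖.inner_le X Y

theorem norm_τ_sub_τ_le (x y : 𝒳) : ‖𝔖.τ x - 𝔖.τ y‖ ≤ ‖x - y‖ :=
  norm_sub_le_of_norm_eq_of_inner_le 𝔖.norm_τ 𝔖.inner_le_inner_τ x y

theorem continuous_γ : Continuous 𝔖.γ :=
  LipschitzWith.continuous (K := 1) <| LipschitzWith.of_dist_le_mul fun X Y => by
    simpa [dist_eq_norm] using 𝔖.norm_γ_sub_γ_le X Y

theorem γ_Λ_γ (a : A) (X : H) : 𝔖.γ (𝔖.Λ a (𝔖.γ X)) = 𝔖.γ X := by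
  obtain ⟨b, hb⟩ := 𝔖.decomp X
  rw [γΛ, ← γΛ 𝔖 b, ← hb]

theorem comp_γ_Λ {φ : 𝒳 → EReal} (hφ : ∀ (s : S) (x : 𝒳), φ (𝔖.act s x) = φ x)
    (a : A) (x : 𝒳) : φ (𝔖.γ (𝔖.Λ a x)) = φ x := by
  obtain ⟨s, hs⟩ := 𝔖.τ_orbit x
  rw [γΛ, hs, hφ]

/-- The witness `z` is `γ Z` moved back by the element of `S` that orders `x + t v`. -/
theorem exists_orbit_inner_sub_le (b : A) (x v : 𝒳) (Z : H) {t : ℝ} (ht : 0 ≤ t) :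
    ∃ z, (∃ s, 𝔖.act s z = 𝔖.γ Z) ∧ ‖z - x‖ ≤ ‖Z - 𝔖.Λ b x‖ + 2 * t * ‖v‖ ∧
      t * (⟪Z - 𝔖.Λ b x, 𝔖.Λ b v⟫ - ⟪z - x, v⟫) ≤ ‖Z - 𝔖.Λ b x‖ ^ 2 / 2 := by
  obtain ⟨s, hs⟩ := 𝔖.τ_orbit (x + t • v)
  set z := (𝔖.act s).symm (𝔖.γ Z)
  have hz : 𝔖.act s z = 𝔖.γ Z := (𝔖.act s).apply_symm_apply _
  refine ⟨z, ⟨s, hz⟩, ?_, ?_⟩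
  · have htv : ‖t • v‖ = t * ‖v‖ := by rw [norm_smul, Real.norm_of_nonneg ht]
    calc ‖z - x‖ = ‖𝔖.γ Z - 𝔖.act s x‖ := by
          rw [← hz, ← map_sub, LinearIsometryEquiv.norm_map]
      _ = ‖(𝔖.γ Z - 𝔖.γ (𝔖.Λ b x)) + (𝔖.τ x - 𝔖.τ (x + t • v)) + 𝔖.act s (t • v)‖ := by
          rw [γΛ, hs, map_add]; congr 1; abel
      _ ≤ ‖𝔖.γ Z - 𝔖.γ (𝔖.Λ b x)‖ + ‖𝔖.τ x - 𝔖.τ (x + t • v)‖ + ‖𝔖.act s (t • v)‖ :=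
          norm_add₃_le
      _ ≤ ‖Z - 𝔖.Λ b x‖ + ‖t • v‖ + ‖t • v‖ := by
          gcongr
          · exact 𝔖.norm_γ_sub_γ_le _ _
          · simpa using 𝔖.norm_τ_sub_τ_le x (x + t • v)
          · exact (LinearIsometryEquiv.norm_map _ _).le
      _ = ‖Z - 𝔖.Λ b x‖ + 2 * t * ‖v‖ := by rw [htv]; ring
  · have hinner : ⟪Z, 𝔖.Λ b x⟫ + t * ⟪Z, 𝔖.Λ b v⟫ ≤ ⟪z, x⟫ + t * ⟪z, v⟫ := by
      calc ⟪Z, 𝔖.Λ b x⟫ + t * ⟪Z, 𝔖.Λ b v⟫ = ⟪Z, 𝔖.Λ b (x + t • v)⟫ := by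
            rw [map_add, map_smul, inner_add_right, real_inner_smul_right]
        _ ≤ ⟪𝔖.γ Z, 𝔖.γ (𝔖.Λ b (x + t • v))⟫ := 𝔖.inner_le _ _
        _ = ⟪z, x + t • v⟫ := by rw [γΛ, hs, ← hz, LinearIsometryEquiv.inner_map_map]
        _ = ⟪z, x⟫ + t * ⟪z, v⟫ := by rw [inner_add_right, real_inner_smul_right]
    have hz_norm : ‖z‖ = ‖Z‖ := by rw [← (𝔖.act s).norm_map, hz, 𝔖.norm_γ]
    have h₁ := norm_sub_sq_real z x
    have h₂ := norm_sub_sq_real Z (𝔖.Λ b x)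
    rw [hz_norm, ← (𝔖.Λ b).norm_map x] at h₁
    rw [inner_sub_left, inner_sub_left, LinearIsometry.inner_map_map]
    linarith [sq_nonneg ‖z - x‖]

theorem mem_AX_of_tendsto {c : ℕ → A} {a : A} {Xn : ℕ → H} {X : H}
    (hΛ : Tendsto (fun n => (𝔖.Λ (c n)).toContinuousLinearMap) atTop
      (𝓝 (𝔖.Λ a).toContinuousLinearMap))
    (hX : Tendsto Xn atTop (𝓝 X)) (hc : ∀ n, c n ∈ 𝔖.AX (Xn n)) : a ∈ 𝔖.AX X :=
  tendsto_nhds_unique hX <|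
    (hΛ.clm_apply ((𝔖.continuous_γ.tendsto X).comp hX)).congr fun n => (hc n).symm

theorem norm_Λ_γ_sub_le {X Y : H} {t : ℝ} (ht : 0 ≤ t) {c : A} (hc : c ∈ 𝔖.AX (X + t • Y)) :
    ‖𝔖.Λ c (𝔖.γ X) - X‖ ≤ 2 * t * ‖Y‖ := by
  have htY : ‖t • Y‖ = t * ‖Y‖ := by rw [norm_smul, Real.norm_of_nonneg ht]
  calc ‖𝔖.Λ c (𝔖.γ X) - X‖ = ‖𝔖.Λ c (𝔖.γ X - 𝔖.γ (X + t • Y)) + t • Y‖ := by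
        rw [map_sub, ← hc]; congr 1; abel
    _ ≤ ‖X - (X + t • Y)‖ + ‖t • Y‖ := by
        grw [norm_add_le, LinearIsometry.norm_map, 𝔖.norm_γ_sub_γ_le]
    _ = 2 * t * ‖Y‖ := by rw [sub_add_cancel_left, norm_neg, htY]; ring

theorem Λ_mem_fSubdiff {φ : 𝒳 → EReal} (hφ : ∀ (s : S) (x : 𝒳), φ (𝔖.act s x) = φ x)
    {x v : 𝒳} (hv : v ∈ fSubdiff φ x) (b : A) :
    𝔖.Λ b v ∈ fSubdiff (fun Z => φ (𝔖.γ Z)) (𝔖.Λ b x) := by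
  refine mem_fSubdiff_of_forall_exists hv (𝔖.comp_γ_Λ hφ b x) fun ε hε =>
    ⟨1 + ‖v‖ / ε, fun Z hZ => ?_⟩
  set d := ‖Z - 𝔖.Λ b x‖
  have hd : 0 < d := norm_pos_iff.2 (sub_ne_zero.2 hZ)
  -- with `t = d / (2ε)` the bound `d ^ 2 / 2` of the transfer lemma becomes `t * (ε d)`
  have ht : 0 < d / (2 * ε) := by positivity
  obtain ⟨z, ⟨s, hs⟩, hzx, hinner⟩ := 𝔖.exists_orbit_inner_sub_le b x v Z ht.le
  refine ⟨z, by rw [← hs, hφ], hzx.trans_eq (by field_simp; ring), ?_⟩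
  refine le_of_mul_le_mul_left (hinner.trans_eq ?_) ht
  field_simp
  ring

section FiniteDimensional

variable [FiniteDimensional ℝ 𝒳] [FiniteDimensional ℝ H]

def Λstar (a : A) : H →L[ℝ] 𝒳 := (𝔖.Λ a).toContinuousLinearMap.adjoint

theorem exists_subseq_tendsto (hcl : IsClosed 𝔖.LambdaSet) (c : ℕ → A) :
    ∃ a, ∃ ψ : ℕ → ℕ, StrictMono ψ ∧ Tendsto (fun k => (𝔖.Λ (c (ψ k))).toContinuousLinearMap)
      atTop (𝓝 (𝔖.Λ a).toContinuousLinearMap) := by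
  have hK : IsCompact 𝔖.LambdaSet := by
    refine Metric.isCompact_of_isClosed_isBounded hcl (isBounded_iff_forall_norm_le.2 ⟨1, ?_⟩)
    rintro _ ⟨a, rfl⟩
    exact ContinuousLinearMap.opNorm_le_bound _ zero_le_one fun x => by simp
  obtain ⟨_, ⟨a, rfl⟩, ψ, hψ, hlim⟩ := hK.tendsto_subseq fun n => ⟨c n, rfl⟩
  exact ⟨a, ψ, hψ, hlim⟩

theorem tendsto_Λstar {c : ℕ → A} {a : A}
    (hΛ : Tendsto (fun n => (𝔖.Λ (c n)).toContinuousLinearMap) atTop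
      (𝓝 (𝔖.Λ a).toContinuousLinearMap)) :
    Tendsto (fun n => 𝔖.Λstar (c n)) atTop (𝓝 (𝔖.Λstar a)) :=
  (ContinuousLinearMap.adjoint.continuous.tendsto _).comp hΛ

theorem inner_sub_le_of_mem_AX {X Y : H} {t : ℝ} (ht : 0 ≤ t) {c : A}
    (hc : c ∈ 𝔖.AX (X + t • Y)) :
    t * ‖Y‖ ^ 2 - ⟪𝔖.Λ c (𝔖.γ X) - X, Y⟫ ≤ t * ‖Y‖ * ‖𝔖.Λstar c Y‖ := by
  calc t * ‖Y‖ ^ 2 - ⟪𝔖.Λ c (𝔖.γ X) - X, Y⟫ = ⟪X + t • Y - 𝔖.Λ c (𝔖.γ X), Y⟫ := by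
        rw [inner_sub_left, inner_sub_left, inner_add_left, real_inner_smul_left,
          real_inner_self_eq_norm_sq]
        ring
    _ = ⟪𝔖.γ (X + t • Y) - 𝔖.γ X, 𝔖.Λstar c Y⟫ := by
        rw [Λstar, ContinuousLinearMap.adjoint_inner_right, LinearIsometry.coe_toContinuousLinearMap,
          map_sub, ← hc]
    _ ≤ ‖X + t • Y - X‖ * ‖𝔖.Λstar c Y‖ := by
        grw [real_inner_le_norm, 𝔖.norm_γ_sub_γ_le]
    _ = t * ‖Y‖ * ‖𝔖.Λstar c Y‖ := by
        rw [add_sub_cancel_left, norm_smul, Real.norm_of_nonneg ht]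

/-- Decompose `X + t Y` along `Λ_{c_t}` and let `t → 0`: the Fréchet inequality at
`Λ_{c_t} (γ X)` forces `‖Λ_{c_t}^* Y‖ → ‖Y‖`, and `Λ_a` is a limit point of the `Λ_{c_t}`. -/
theorem exists_mem_AX_Λ_Λstar_eq (hcl : IsClosed 𝔖.LambdaSet) {φ : 𝒳 → EReal} {X Y : H}
    (hY : Y ∈ fSubdiff (fun Z => φ (𝔖.γ Z)) X) :
    ∃ a ∈ 𝔖.AX X, 𝔖.Λ a (𝔖.Λstar a Y) = Y := by
  set t : ℕ → ℝ := fun n => 1 / ((n : ℝ) + 1)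
  have ht : ∀ n, 0 < t n := fun n => Nat.one_div_pos_of_nat
  choose c hc using fun n => 𝔖.decomp (X + t n • Y)
  obtain ⟨a, ψ, hψ, hΛ⟩ := 𝔖.exists_subseq_tendsto hcl c
  have htψ : Tendsto (fun k => t (ψ k)) atTop (𝓝 0) :=
    tendsto_one_div_add_atTop_nhds_zero_nat.comp hψ.tendsto_atTop
  refine ⟨a, 𝔖.mem_AX_of_tendsto hΛ ?_ fun k => hc (ψ k),
    (𝔖.Λ a).apply_adjoint_apply_of_norm_le ?_⟩
  · simpa using tendsto_const_nhds.add (htψ.smul_const Y)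
  have hZ : Tendsto (fun k => 𝔖.Λ (c (ψ k)) (𝔖.γ X)) atTop (𝓝 X) := by
    refine tendsto_iff_norm_sub_tendsto_zero.2 <| squeeze_zero (fun _ => norm_nonneg _)
      (fun k => 𝔖.norm_Λ_γ_sub_le (ht _).le (hc (ψ k))) ?_
    simpa using (htψ.const_mul 2).mul_const ‖Y‖
  have hu : Tendsto (fun k => ‖Y‖ * ‖𝔖.Λstar (c (ψ k)) Y‖) atTop
      (𝓝 (‖Y‖ * ‖𝔖.Λstar a Y‖)) :=
    (((𝔖.tendsto_Λstar hΛ).clm_apply tendsto_const_nhds).norm).const_mul _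
  have key : ∀ ε > 0, ‖Y‖ * (‖Y‖ - 2 * ε) ≤ ‖Y‖ * ‖𝔖.Λstar a Y‖ := by
    intro ε hε
    refine ge_of_tendsto hu ?_
    filter_upwards [hZ.eventually (inner_sub_le_of_mem_fSubdiff hY hε)] with k hk
    have h₁ := 𝔖.inner_sub_le_of_mem_AX (ht (ψ k)).le (hc (ψ k))
    have h₂ := hk (by simp only [𝔖.γ_Λ_γ, le_refl])
    have h₃ := 𝔖.norm_Λ_γ_sub_le (ht (ψ k)).le (hc (ψ k))
    refine le_of_mul_le_mul_left ?_ (ht (ψ k))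
    linarith [mul_le_mul_of_nonneg_left h₃ hε.le]
  change ‖Y‖ ≤ ‖𝔖.Λstar a Y‖
  rcases (norm_nonneg Y).eq_or_lt with hY0 | hYpos
  · rw [← hY0]; exact norm_nonneg _
  refine le_of_forall_pos_le_add fun ε hε => ?_
  have := le_of_mul_le_mul_left (key (ε / 2) (half_pos hε)) hYpos
  linarith

theorem Λstar_mem_fSubdiff {φ : 𝒳 → EReal} (hφ : ∀ (s : S) (x : 𝒳), φ (𝔖.act s x) = φ x)
    {X Y : H} {c : A} (hc : c ∈ 𝔖.AX X) (hY : Y ∈ fSubdiff (fun Z => φ (𝔖.γ Z)) X) :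
    𝔖.Λstar c Y ∈ fSubdiff φ (𝔖.γ X) := by
  rw [show X = _ from hc] at hY
  have h := (𝔖.Λ c).adjoint_mem_fSubdiff_comp hY
  rwa [show (fun Z => φ (𝔖.γ Z)) ∘ 𝔖.Λ c = φ from funext (𝔖.comp_γ_Λ hφ c)] at h

end FiniteDimensional

end SDS

/-- For an `S`-invariant `φ : 𝒳 → [-∞, +∞]` and `X ∈ H`:
`∂_L(φ ∘ γ)(X) = {Λ_a y : y ∈ ∂_L φ(γ(X)), a ∈ A_X}`. -/
theorem limiting_subdiff_spectral
    [FiniteDimensional ℝ 𝒳] [FiniteDimensional ℝ H]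
    (𝔖 : SDS 𝒳 H S A) (hcl : IsClosed 𝔖.LambdaSet)
    (φ : 𝒳 → EReal) (hφ : ∀ (s : S) (x : 𝒳), φ (𝔖.act s x) = φ x)
    (X : H) :
    lSubdiff (fun Z => φ (𝔖.γ Z)) X
      = {Y | ∃ y ∈ lSubdiff φ (𝔖.γ X), ∃ a ∈ 𝔖.AX X, Y = 𝔖.Λ a y} := by
  ext Y
  constructor
  · rintro ⟨hfin, Xn, Yn, hYn, hXn, hφn, hYlim⟩
    choose c hcX hcY using fun n => 𝔖.exists_mem_AX_Λ_Λstar_eq hcl (hYn n)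
    obtain ⟨a, ψ, hψ, hΛ⟩ := 𝔖.exists_subseq_tendsto hcl c
    have hXψ := hXn.comp hψ.tendsto_atTop
    have hYψ := hYlim.comp hψ.tendsto_atTop
    have hy : Tendsto (fun k => 𝔖.Λstar (c (ψ k)) (Yn (ψ k))) atTop (𝓝 (𝔖.Λstar a Y)) :=
      (𝔖.tendsto_Λstar hΛ).clm_apply hYψ
    refine ⟨𝔖.Λstar a Y, ⟨hfin, fun k => 𝔖.γ (Xn (ψ k)), _,
      fun k => 𝔖.Λstar_mem_fSubdiff hφ (hcX (ψ k)) (hYn (ψ k)),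
      (𝔖.continuous_γ.tendsto X).comp hXψ, hφn.comp hψ.tendsto_atTop, hy⟩,
      a, 𝔖.mem_AX_of_tendsto hΛ hXψ fun k => hcX (ψ k), ?_⟩
    exact tendsto_nhds_unique hYψ ((hΛ.clm_apply hy).congr fun k => hcY (ψ k))
  · rintro ⟨y, ⟨hfin, xn, yn, hyn, hxn, hφn, hylim⟩, a, ha, rfl⟩
    refine ⟨hfin, fun n => 𝔖.Λ a (xn n), fun n => 𝔖.Λ a (yn n),
      fun n => 𝔖.Λ_mem_fSubdiff hφ (hyn n) a, ?_, ?_, (𝔖.Λ a).continuous.tendsto y |>.comp hylim⟩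
    · rw [show X = _ from ha]
      exact ((𝔖.Λ a).continuous.tendsto _).comp hxn
    · simpa only [𝔖.comp_γ_Λ hφ] using hφn
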